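/- arXiv:2109.10623 — 5 statements merged into one kernel-verified Lean document; each statement's English description precedes it below -/
import Mathlib

section
/- Let H be a Hilbert space, E an inner product space, Ψ: E → H a bounded linear operator, and L a positive self-adjoint bounded operator on H. Fix λ > 0, let B = ΨΨ*, and suppose ‖(L + λI)^{-1/2}(B − L)(L + λI)^{-1/2}‖ ≤ 1/2. Then for every f ∈ H, the vector β̂ = Ψ*(B + λI)^{-1} f satisfies ‖β̂‖² ≤ 2 ⟨f, (L + λI)^{-1} f⟩. -/
open ContinuousLinearMap

open scoped InnerProductSpace

/-!
Write `A = L + λ`, `g = (B + λ)⁻¹ f` and `u = S⁻¹ g = A S g`. Then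
`‖Ψ* g‖² = ⟪g, B g⟫ ≤ ⟪g, (B + λ) g⟫ = ⟪g, f⟫ = ⟪u, S f⟫`. Since `S A S = 1`, the vector
`S f = S (B + λ) S u` equals `u + S (B − L) S u`, so it is within `‖u‖ / 2` of `u`.
For such a pair `½ ‖u‖² ≤ ⟪u, S f⟫ ≤ ‖u‖ ‖S f‖`, whence
`⟪u, S f⟫ ≤ 2 ‖S f‖² = 2 ⟪f, S² f⟫`.
-/

theorem Commute.of_mul_self_mul_eq_one {M : Type*} [Monoid M] {s a : M}
    (h₁ : s * s * a = 1) (h₂ : a * (s * s) = 1) : Commute s a :=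
  Commute.units_inv_right (u := ⟨s * s, a, h₁, h₂⟩)
    ((Commute.refl s).mul_right (Commute.refl s))

theorem mul_mul_eq_one_of_mul_self_mul_eq_one {M : Type*} [Monoid M] {s a : M}
    (h₁ : s * s * a = 1) (h₂ : a * (s * s) = 1) : s * a * s = 1 := by
  rw [(Commute.of_mul_self_mul_eq_one h₁ h₂).eq, mul_assoc, h₂]

section RealInnerProductSpace

variable {F : Type*} [NormedAddCommGroup F] [InnerProductSpace ℝ F]

theorem mul_norm_sq_le_real_inner_of_norm_sub_le {u v : F} {c : ℝ}
    (h : ‖v - u‖ ≤ c * ‖u‖) : (1 - c) * ‖u‖ ^ 2 ≤ ⟪u, v⟫_ℝ := by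
  have hcs : |⟪u, v - u⟫_ℝ| ≤ ‖u‖ * ‖v - u‖ := abs_real_inner_le_norm _ _
  have hsplit : ⟪u, v⟫_ℝ = ‖u‖ ^ 2 + ⟪u, v - u⟫_ℝ := by
    rw [inner_sub_right, real_inner_self_eq_norm_sq]; ring
  nlinarith [neg_abs_le ⟪u, v - u⟫_ℝ, norm_nonneg u]

theorem mul_real_inner_le_norm_sq_of_norm_sub_le {u v : F} {c : ℝ} (hc : c ≤ 1)
    (h : ‖v - u‖ ≤ c * ‖u‖) : (1 - c) * ⟪u, v⟫_ℝ ≤ ‖v‖ ^ 2 := by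
  have hlow := mul_norm_sq_le_real_inner_of_norm_sub_le h
  have hcs : ⟪u, v⟫_ℝ ≤ ‖u‖ * ‖v‖ := real_inner_le_norm _ _
  nlinarith [norm_nonneg u, norm_nonneg v, sq_nonneg ((1 - c) * ‖u‖ - ‖v‖)]

end RealInnerProductSpace

theorem norm_adjoint_apply_sq_le_inner {E H : Type*}
    [NormedAddCommGroup E] [InnerProductSpace ℝ E] [CompleteSpace E]
    [NormedAddCommGroup H] [InnerProductSpace ℝ H] [CompleteSpace H]
    (Ψ : E →L[ℝ] H) {lam : ℝ} (hlam : 0 ≤ lam) (g : H) :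
    ‖adjoint Ψ g‖ ^ 2 ≤ ⟪g, (Ψ.comp (adjoint Ψ) + lam • 1) g⟫_ℝ := by
  have hnorm := apply_norm_sq_eq_inner_adjoint_right (adjoint Ψ) g
  rw [adjoint_adjoint] at hnorm
  rw [hnorm, RCLike.re_to_real, add_apply, inner_add_right, smul_apply,
    one_apply_eq_self, real_inner_smul_right]
  exact le_add_of_nonneg_right (mul_nonneg hlam real_inner_self_nonneg)

theorem coefficient_norm_bound_general
    {E H : Type*} [NormedAddCommGroup E] [InnerProductSpace ℝ E] [CompleteSpace E]
    [NormedAddCommGroup H] [InnerProductSpace ℝ H] [CompleteSpace H]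
    (Ψ : E →L[ℝ] H) (L : H →L[ℝ] H)
    (lam : ℝ) (hlam : 0 < lam)
    (S : H →L[ℝ] H) (hSpos : S.IsPositive)
    (hS : S * S * (L + lam • 1) = 1 ∧ (L + lam • 1) * (S * S) = 1)
    (hcontrast : ‖S * (Ψ.comp (adjoint Ψ) - L) * S‖ ≤ 1 / 2)
    (Binv : H →L[ℝ] H)
    (hBinv : Binv * (Ψ.comp (adjoint Ψ) + lam • 1) = 1 ∧
      (Ψ.comp (adjoint Ψ) + lam • 1) * Binv = 1)
    (f : H) :
    ‖adjoint Ψ (Binv f)‖ ^ 2 ≤ 2 * @inner ℝ _ _ f (S (S f)) := by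
  set B := Ψ.comp (adjoint Ψ)
  set g := Binv f
  set u := ((L + lam • 1) * S) g
  have hSAS : S * (L + lam • 1) * S = 1 := mul_mul_eq_one_of_mul_self_mul_eq_one hS.1 hS.2
  have hg : (B + lam • 1) g = f := DFunLike.congr_fun hBinv.2 f
  have hSu : S u = g := DFunLike.congr_fun hSAS g
  have hSf : S f - u = (S * (B - L) * S) u := by
    have hsplit : S * (B + lam • 1) * S = S * (B - L) * S + 1 := by
      rw [show B + lam • 1 = B - L + (L + lam • 1) by abel, mul_add, add_mul, hSAS]
    calc S f - u = (S * (B + lam • 1) * S) u - u := by rw [← hg, ← hSu]; rfl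
      _ = (S * (B - L) * S) u := by
        rw [hsplit, add_apply, one_apply_eq_self, add_sub_cancel_right]
  have hclose : ‖S f - u‖ ≤ 1 / 2 * ‖u‖ :=
    hSf ▸ (le_opNorm _ _).trans (mul_le_mul_of_nonneg_right hcontrast (norm_nonneg _))
  calc ‖adjoint Ψ g‖ ^ 2 ≤ ⟪g, (B + lam • 1) g⟫_ℝ := norm_adjoint_apply_sq_le_inner Ψ hlam.le g
    _ = ⟪u, S f⟫_ℝ := by rw [hg, ← hSu, hSpos.inner_left_eq_inner_right]
    _ ≤ 2 * ‖S f‖ ^ 2 := by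
      linarith [mul_real_inner_le_norm_sq_of_norm_sub_le (by norm_num) hclose]
    _ = 2 * ⟪f, S (S f)⟫_ℝ := by
      rw [← real_inner_self_eq_norm_sq, hSpos.inner_left_eq_inner_right]

/-- Norm bound on the coefficient vector of the random-features approximation: if
`B = ΨΨ*` satisfies `‖(L+λI)^{-1/2}(B − L)(L+λI)^{-1/2}‖ ≤ 1/2`, then
`β̂ = Ψ*(B+λI)^{-1}f` satisfies `‖β̂‖² ≤ 2⟨f, (L+λI)^{-1}f⟩`.  Here `S` is the
(unique) positive self-adjoint square root of `(L+λI)^{-1}`, i.e. `S = (L+λI)^{-1/2}`. -/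
theorem coefficient_norm_bound
    {E H : Type*} [NormedAddCommGroup E] [InnerProductSpace ℝ E] [CompleteSpace E]
    [NormedAddCommGroup H] [InnerProductSpace ℝ H] [CompleteSpace H]
    (Ψ : E →L[ℝ] H) (L : H →L[ℝ] H) (hL : L.IsPositive)
    (lam : ℝ) (hlam : 0 < lam)
    (S : H →L[ℝ] H) (hSpos : S.IsPositive)
    (hS : S * S * (L + lam • 1) = 1 ∧ (L + lam • 1) * (S * S) = 1)
    (hcontrast : ‖S * (Ψ.comp (adjoint Ψ) - L) * S‖ ≤ 1 / 2)
    (Binv : H →L[ℝ] H)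
    (hBinv : Binv * (Ψ.comp (adjoint Ψ) + lam • 1) = 1 ∧
      (Ψ.comp (adjoint Ψ) + lam • 1) * Binv = 1)
    (f : H) :
    ‖adjoint Ψ (Binv f)‖ ^ 2 ≤ 2 * @inner ℝ _ _ f (S (S f)) :=
  coefficient_norm_bound_general Ψ L lam hlam S hSpos hS hcontrast Binv hBinv f
end

section
/- Let H be a Hilbert space, λ > 0, and let v ↦ ψ_v ∈ H be a measurable family of vectors indexed by a measure space (V, ν) with probability density p, such that the positive self-adjoint bounded operator L = ∫_V (ψ_v ⊗ ψ_v) p(v) dν(v) exists as a Bochner integral. Define τ_λ(v) = p(v)⟨ψ_v, (L + λI)^{-1} ψ_v⟩, let τ̃ ≥ τ_λ ν-a.e. be measurable with d_τ̃ = ∫_V τ̃ dν < ∞, set q(v) = τ̃(v)/d_τ̃ and R_v = (p(v)/q(v)) (L + λI)^{-1/2} (ψ_v ⊗ ψ_v) (L + λI)^{-1/2}. Then, in the Loewner order on self-adjoint operators, ∫_V R_v² q(v) dν(v) ⪯ d_τ̃ · (L + λI)^{-1/2} L (L + λI)^{-1/2}. -/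
open MeasureTheory ContinuousLinearMap InnerProductSpace

/-!
Put `G v = p v • (Sψ_v ⊗ Sψ_v) = S (p v • ψ_v ⊗ ψ_v) S`, so that `S L S = ∫ G` and the integrand
is `(q v)⁻¹ • G v ^ 2`. Since `G v` is rank one, `G v ^ 2 = p v ‖Sψ_v‖² • G v`, and
`p v ‖Sψ_v‖² = p v ⟪ψ_v, S² ψ_v⟫ ≤ τ̃ v = d_τ̃ q v`; hence `(q v)⁻¹ • G v ^ 2 ⪯ d_τ̃ • G v`
pointwise, and integrals of positive operators are positive.
-/

-- Also at `q = 0`, where `c / 0 = 0` and `0⁻¹ = 0` make both sides vanish.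
theorem smul_div_smul_mul_div_smul {K A : Type*} [Field K] [Ring A] [Algebra K A] (q c : K)
    (X : A) : q • ((c / q) • X * (c / q) • X) = q⁻¹ • (c • X * c • X) := by
  simp only [smul_mul_smul_comm, smul_smul]
  congr 1
  rcases eq_or_ne q 0 with rfl | hq
  · simp
  · field_simp

theorem inv_div_mul_le_of_le {a t d : ℝ} (hd : 0 ≤ d) (ha : 0 ≤ a) (hat : a ≤ t) :
    (t / d)⁻¹ * a ≤ d := by
  rw [inv_div]
  rcases (ha.trans hat).eq_or_lt with rfl | ht
  · simpa using hd
  · calc d / t * a ≤ d / t * t := mul_le_mul_of_nonneg_left hat (by positivity)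
      _ = d := div_mul_cancel₀ d ht.ne'

section IntegralOfPositive

variable {𝕜 E V : Type*} [RCLike 𝕜] [NormedAddCommGroup E] [InnerProductSpace 𝕜 E]
  [CompleteSpace E] [NormedSpace ℝ E] [IsScalarTower ℝ 𝕜 E] [MeasurableSpace V] {ν : Measure V}

theorem inner_integral_apply_right {T : V → E →L[𝕜] E} (hT : Integrable T ν) (x y : E) :
    inner 𝕜 x ((∫ v, T v ∂ν) y) = ∫ v, inner 𝕜 x (T v y) ∂ν := by
  rw [integral_apply hT]
  exact (integral_inner ((apply 𝕜 E y).integrable_comp hT) x).symm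

theorem isPositive_integral {T : V → E →L[𝕜] E} (hT : Integrable T ν)
    (hpos : ∀ᵐ v ∂ν, (T v).IsPositive) : (∫ v, T v ∂ν).IsPositive := by
  refine ⟨fun x y => ?_, fun x => ?_⟩
  · change inner 𝕜 ((∫ v, T v ∂ν) x) y = inner 𝕜 x ((∫ v, T v ∂ν) y)
    rw [← inner_conj_symm, inner_integral_apply_right hT, inner_integral_apply_right hT,
      ← integral_conj]
    refine integral_congr_ae ?_
    filter_upwards [hpos] with v hv
    rw [inner_conj_symm, hv.inner_left_eq_inner_right]
  · have hint : Integrable (fun v => inner 𝕜 x (T v x)) ν :=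
      ((innerSL 𝕜 x).comp (apply 𝕜 E x)).integrable_comp hT
    rw [reApplyInnerSelf_apply, inner_re_symm, inner_integral_apply_right hT, ← integral_re hint]
    exact integral_nonneg_of_ae (hpos.mono fun v hv => hv.re_inner_nonneg_right x)

end IntegralOfPositive

theorem conj_rankOne_self {𝕜 E : Type*} [RCLike 𝕜] [NormedAddCommGroup E] [InnerProductSpace 𝕜 E]
    {S : E →L[𝕜] E} (hS : S.IsSymmetric) (x : E) :
    S * rankOne 𝕜 x x * S = rankOne 𝕜 (S x) (S x) := by
  ext z
  simp only [mul_apply_eq_comp, rankOne_apply, map_smul]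
  exact congrArg (· • S x) (hS x z).symm

section Real

variable {E : Type*} [NormedAddCommGroup E] [InnerProductSpace ℝ E]

theorem smul_rankOne_self_mul_self (c : ℝ) (x : E) :
    c • rankOne ℝ x x * c • rankOne ℝ x x = (c * ‖x‖ ^ 2) • c • rankOne ℝ x x := by
  rw [smul_mul_smul_comm, mul_def, rankOne_comp_rankOne, real_inner_self_eq_norm_sq, smul_smul,
    smul_smul, mul_right_comm]

theorem isPositive_smul_integral_sub_integral_inv_smul_mul_self [CompleteSpace E]
    {V : Type*} [MeasurableSpace V] {ν : Measure V} {G : V → E →L[ℝ] E} (hG : Integrable G ν)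
    (hGpos : ∀ᵐ v ∂ν, (G v).IsPositive) {a w : V → ℝ} (hw : Measurable w)
    (hGsq : ∀ᵐ v ∂ν, G v * G v = a v • G v) {d : ℝ}
    (hbound : ∀ᵐ v ∂ν, 0 ≤ (w v)⁻¹ * a v ∧ (w v)⁻¹ * a v ≤ d) :
    (d • ∫ v, G v ∂ν - ∫ v, (w v)⁻¹ • (G v * G v) ∂ν).IsPositive := by
  have hnorm : ∀ᵐ v ∂ν, ‖(w v)⁻¹ • (G v * G v)‖ ≤ d * ‖G v‖ := by
    filter_upwards [hGsq, hbound] with v hsq ⟨hnonneg, hle⟩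
    rw [hsq, smul_smul, norm_smul, Real.norm_of_nonneg hnonneg]
    exact mul_le_mul_of_nonneg_right hle (norm_nonneg _)
  have hint : Integrable (fun v => (w v)⁻¹ • (G v * G v)) ν :=
    (hG.norm.const_mul d).mono' (hw.inv.aestronglyMeasurable.smul (hG.1.mul hG.1)) hnorm
  have hdG : Integrable (fun v => d • G v) ν := hG.smul d
  rw [← integral_smul, ← integral_sub hdG hint]
  refine isPositive_integral (hdG.sub hint) ?_
  filter_upwards [hGpos, hGsq, hbound] with v hpos hsq ⟨_, hle⟩
  rw [hsq, smul_smul, ← sub_smul]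
  exact hpos.smul_of_nonneg (sub_nonneg.2 hle)

end Real

theorem rank_one_summand_variance_bound_general
    {H : Type*} [NormedAddCommGroup H] [InnerProductSpace ℝ H] [CompleteSpace H]
    {V : Type*} [MeasurableSpace V] (ν : Measure V)
    (ψv : V → H)
    (p : V → ℝ) (hp0 : ∀ v, 0 ≤ p v)
    (L : H →L[ℝ] H)
    (hLint : Integrable (fun v => p v • (innerSL ℝ (ψv v)).smulRight (ψv v)) ν)
    (hLdef : L = ∫ v, p v • (innerSL ℝ (ψv v)).smulRight (ψv v) ∂ν)
    (S : H →L[ℝ] H) (hSpos : S.IsPositive)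
    (tauTil : V → ℝ) (htaumeas : Measurable tauTil)
    (htau : ∀ᵐ v ∂ν, p v * @inner ℝ _ _ (ψv v) ((S * S) (ψv v)) ≤ tauTil v) :
    (((∫ u, tauTil u ∂ν) • (S * L * S)) -
        ∫ v, (tauTil v / ∫ u, tauTil u ∂ν) •
          (((p v / (tauTil v / ∫ u, tauTil u ∂ν)) •
              (S * (innerSL ℝ (ψv v)).smulRight (ψv v) * S)) *
           ((p v / (tauTil v / ∫ u, tauTil u ∂ν)) •
              (S * (innerSL ℝ (ψv v)).smulRight (ψv v) * S))) ∂ν).IsPositive := by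
  simp only [← rankOne_def] at hLint hLdef ⊢
  set d := ∫ u, tauTil u ∂ν
  have hconj : ∀ v, S * (p v • rankOne ℝ (ψv v) (ψv v)) * S =
      p v • rankOne ℝ (S (ψv v)) (S (ψv v)) := fun v => by
    rw [mul_smul_comm, smul_mul_assoc, conj_rankOne_self hSpos.isSymmetric]
  have hG : Integrable (fun v => p v • rankOne ℝ (S (ψv v)) (S (ψv v))) ν := by
    simpa only [mulLeftRight_apply, hconj] using (mulLeftRight ℝ _ S S).integrable_comp hLint
  have hSLS : S * L * S = ∫ v, p v • rankOne ℝ (S (ψv v)) (S (ψv v)) ∂ν := by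
    rw [hLdef, ← mulLeftRight_apply ℝ, ← (mulLeftRight ℝ _ S S).integral_comp_comm hLint]
    simp only [mulLeftRight_apply, hconj]
  have hτ : ∀ᵐ v ∂ν, p v * ‖S (ψv v)‖ ^ 2 ≤ tauTil v := by
    filter_upwards [htau] with v hv
    rwa [mul_apply_eq_comp, ← hSpos.inner_left_eq_inner_right, real_inner_self_eq_norm_sq] at hv
  have ha : ∀ v, 0 ≤ p v * ‖S (ψv v)‖ ^ 2 := fun v => mul_nonneg (hp0 v) (sq_nonneg _)
  have hd : 0 ≤ d := integral_nonneg_of_ae (hτ.mono fun v hv => (ha v).trans hv)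
  simp only [hSLS, conj_rankOne_self hSpos.isSymmetric, smul_div_smul_mul_div_smul]
  refine isPositive_smul_integral_sub_integral_inv_smul_mul_self hG
    (ae_of_all _ fun v => (isPositive_rankOne_self _).smul_of_nonneg (hp0 v))
    (htaumeas.div_const d) (ae_of_all _ fun v => smul_rankOne_self_mul_self _ _) ?_
  filter_upwards [hτ] with v hv
  exact ⟨mul_nonneg (inv_nonneg.2 (div_nonneg ((ha v).trans hv) hd)) (ha v),
    inv_div_mul_le_of_le hd (ha v) hv⟩

/-- Matrix-variance bound for the reweighted rank-one summands: with
`R_v = (p(v)/q(v)) (L+λI)^{-1/2}(ψ_v ⊗ ψ_v)(L+λI)^{-1/2}` and `q = τ̃/d_τ̃`,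
`∫ R_v² q(v) dν ⪯ d_τ̃ · (L+λI)^{-1/2} L (L+λI)^{-1/2}` in the Loewner order.
Here `S` is the (unique) positive self-adjoint square root of `(L+λI)^{-1}`. -/
theorem rank_one_summand_variance_bound
    {H : Type*} [NormedAddCommGroup H] [InnerProductSpace ℝ H] [CompleteSpace H]
    {V : Type*} [MeasurableSpace V] (ν : Measure V)
    (ψv : V → H) (hψweak : ∀ f : H, Measurable fun v => (@inner ℝ _ _ (ψv v) f))
    (p : V → ℝ) (hpmeas : Measurable p) (hp0 : ∀ v, 0 ≤ p v)
    (L : H →L[ℝ] H) (hL : L.IsPositive)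
    (hLint : Integrable (fun v => p v • (innerSL ℝ (ψv v)).smulRight (ψv v)) ν)
    (hLdef : L = ∫ v, p v • (innerSL ℝ (ψv v)).smulRight (ψv v) ∂ν)
    (lam : ℝ) (hlam : 0 < lam)
    (S : H →L[ℝ] H) (hSpos : S.IsPositive)
    (hS : S * S * (L + lam • 1) = 1 ∧ (L + lam • 1) * (S * S) = 1)
    (tauTil : V → ℝ) (htaumeas : Measurable tauTil)
    (htau : ∀ᵐ v ∂ν, p v * @inner ℝ _ _ (ψv v) ((S * S) (ψv v)) ≤ tauTil v)
    (hint : Integrable tauTil ν) :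
    (((∫ u, tauTil u ∂ν) • (S * L * S)) -
        ∫ v, (tauTil v / ∫ u, tauTil u ∂ν) •
          (((p v / (tauTil v / ∫ u, tauTil u ∂ν)) •
              (S * (innerSL ℝ (ψv v)).smulRight (ψv v) * S)) *
           ((p v / (tauTil v / ∫ u, tauTil u ∂ν)) •
              (S * (innerSL ℝ (ψv v)).smulRight (ψv v) * S))) ∂ν).IsPositive :=
  rank_one_summand_variance_bound_general ν ψv p hp0 L hLint hLdef S hSpos tauTil htaumeas htau
end

section
/- Let γ > 1/2, C₀ > 0, λ > 0, and let (μᵢ)_{i≥1} be a sequence of reals with 0 ≤ μᵢ ≤ C₀ i^{-2γ} for all i ≥ 1. Then the effective degrees of freedom satisfies Σ_{i≥1} μᵢ/(μᵢ + λ) ≤ (2γ/(2γ − 1)) · (C₀/λ)^{1/(2γ)} + 1. -/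
/-!
Each term satisfies `μᵢ / (μᵢ + λ) ≤ min 1 ((C₀ / λ) (i + 1)^{-2γ})`. With `t = (C₀ / λ)^{1/(2γ)}`,
the first `⌈t⌉` terms of the minorant contribute at most `⌈t⌉ ≤ t + 1`, and the integral test bounds
the rest by `(C₀ / λ) ∫_{⌈t⌉}^∞ x^{-2γ} dx ≤ (C₀ / λ) t^{1-2γ} / (2γ - 1) = t / (2γ - 1)`.
-/

open Set

lemma div_add_le_min_one_div {a b c : ℝ} (ha : 0 ≤ a) (hc : 0 < c) (hab : a ≤ b) :
    a / (a + c) ≤ min 1 (b / c) := by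
  refine le_min ((div_le_one (by positivity)).2 (by linarith)) ?_
  calc a / (a + c) ≤ a / c := div_le_div_of_nonneg_left ha hc (by linarith)
    _ ≤ b / c := by gcongr

lemma summable_nat_add_one_rpow_neg {s : ℝ} (hs : 1 < s) :
    Summable fun i : ℕ => ((i : ℝ) + 1) ^ (-s) := by
  simpa using (summable_nat_add_iff 1).2 (Real.summable_nat_rpow.2 (neg_lt_neg hs))

lemma summable_min_one_mul_nat_add_one_rpow_neg {c s : ℝ} (hc : 0 ≤ c) (hs : 1 < s) :
    Summable fun i : ℕ => min 1 (c * ((i : ℝ) + 1) ^ (-s)) :=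
  ((summable_nat_add_one_rpow_neg hs).mul_left c).of_nonneg_of_le
    (fun _ => le_min zero_le_one (by positivity)) fun _ => min_le_right _ _

lemma tsum_rpow_neg_nat_add_le {s : ℝ} (hs : 1 < s) {N : ℕ} (hN : 0 < N) :
    ∑' i : ℕ, (((i + N + 1 : ℕ) : ℝ)) ^ (-s) ≤ (N : ℝ) ^ (1 - s) / (s - 1) := by
  have hN' : (0 : ℝ) < N := by exact_mod_cast hN
  have anti : AntitoneOn (fun x : ℝ => x ^ (-s)) (Ici (N : ℝ)) := fun x hx y _ hxy =>
    Real.rpow_le_rpow_of_nonpos (hN'.trans_le hx) hxy (by linarith)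
  refine (anti.tsum_comp_add_le_integral N (integrableOn_Ioi_rpow_of_lt (by linarith) hN')
    fun x hx => Real.rpow_nonneg (hN'.trans hx).le _).trans_eq ?_
  rw [integral_Ioi_rpow_of_lt (by linarith) hN', show -s + 1 = 1 - s by ring, neg_div,
    ← div_neg, neg_sub]

lemma mul_rpow_one_div_rpow_one_sub {c s : ℝ} (hc : 0 < c) (hs : s ≠ 0) :
    c * (c ^ (1 / s)) ^ (1 - s) = c ^ (1 / s) := by
  rw [← Real.rpow_mul hc.le]
  nth_rewrite 1 [← Real.rpow_one c]
  rw [← Real.rpow_add hc]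
  congr 1
  field_simp
  ring

lemma tsum_min_one_mul_nat_add_one_rpow_neg_le {c s : ℝ} (hc : 0 < c) (hs : 1 < s) :
    ∑' i : ℕ, min 1 (c * ((i : ℝ) + 1) ^ (-s)) ≤ s / (s - 1) * c ^ (1 / s) + 1 := by
  set g : ℕ → ℝ := fun i => min 1 (c * ((i : ℝ) + 1) ^ (-s))
  set t := c ^ (1 / s)
  set N := ⌈t⌉₊
  have ht : 0 < t := Real.rpow_pos_of_pos hc _
  have hN : 0 < N := Nat.ceil_pos.2 ht
  have hg : Summable g := summable_min_one_mul_nat_add_one_rpow_neg hc.le hs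
  have head : ∑ i ∈ Finset.range N, g i ≤ t + 1 :=
    calc ∑ i ∈ Finset.range N, g i ≤ ∑ _i ∈ Finset.range N, (1 : ℝ) :=
          Finset.sum_le_sum fun i _ => min_le_left _ _
      _ = N := by simp
      _ ≤ t + 1 := (Nat.ceil_lt_add_one ht.le).le
  have tail : ∑' i, g (i + N) ≤ t / (s - 1) :=
    calc ∑' i, g (i + N) ≤ ∑' i : ℕ, c * (((i + N + 1 : ℕ) : ℝ)) ^ (-s) := by
          refine ((summable_nat_add_iff N).2 hg).tsum_le_tsum (fun i => ?_) ?_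
          · exact (min_le_right _ _).trans_eq (by push_cast; ring_nf)
          · exact ((summable_nat_add_iff (N + 1)).2
              (Real.summable_nat_rpow.2 (neg_lt_neg hs))).mul_left c
      _ ≤ c * ((N : ℝ) ^ (1 - s) / (s - 1)) := by
          rw [tsum_mul_left]
          exact mul_le_mul_of_nonneg_left (tsum_rpow_neg_nat_add_le hs hN) hc.le
      _ ≤ c * (t ^ (1 - s) / (s - 1)) := by
          refine mul_le_mul_of_nonneg_left (div_le_div_of_nonneg_right ?_ (by linarith)) hc.le
          exact Real.rpow_le_rpow_of_nonpos ht (Nat.le_ceil t) (by linarith)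
      _ = t / (s - 1) := by rw [← mul_div_assoc, mul_rpow_one_div_rpow_one_sub hc (by positivity)]
  calc ∑' i, g i = ∑ i ∈ Finset.range N, g i + ∑' i, g (i + N) :=
        (hg.sum_add_tsum_nat_add N).symm
    _ ≤ t + 1 + t / (s - 1) := add_le_add head tail
    _ = s / (s - 1) * t + 1 := by field_simp [(by linarith : s - 1 ≠ 0)]; ring

/-- Under polynomial eigenvalue decay `μᵢ ≤ C₀ i^{-2γ}` (eigenvalues indexed by `i ≥ 1`,
here realized as `μ (i+1)`-style shift: `μ i` bounds correspond to index `i+1`),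
the effective degrees of freedom `Σᵢ μᵢ/(μᵢ + λ)` is at most
`(2γ/(2γ-1)) (C₀/λ)^{1/(2γ)} + 1`. -/
theorem effective_degrees_of_freedom_polynomial_decay
    (γ C₀ lam : ℝ) (hγ : 1 / 2 < γ) (hC₀ : 0 < C₀) (hlam : 0 < lam)
    (μ : ℕ → ℝ) (hμ0 : ∀ i, 0 ≤ μ i)
    (hμ : ∀ i : ℕ, μ i ≤ C₀ * ((i + 1 : ℝ)) ^ (-(2 * γ))) :
    ∑' i : ℕ, μ i / (μ i + lam) ≤
      (2 * γ / (2 * γ - 1)) * (C₀ / lam) ^ (1 / (2 * γ)) + 1 := by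
  have hs : 1 < 2 * γ := by linarith
  have hterm (i : ℕ) : μ i / (μ i + lam) ≤ min 1 (C₀ / lam * ((i : ℝ) + 1) ^ (-(2 * γ))) :=
    (div_add_le_min_one_div (hμ0 i) hlam (hμ i)).trans_eq (by rw [mul_div_right_comm])
  have hc : 0 < C₀ / lam := div_pos hC₀ hlam
  have hsum := summable_min_one_mul_nat_add_one_rpow_neg hc.le hs
  calc ∑' i : ℕ, μ i / (μ i + lam)
      ≤ ∑' i : ℕ, min 1 (C₀ / lam * ((i : ℝ) + 1) ^ (-(2 * γ))) :=
        Summable.tsum_le_tsum hterm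
          (hsum.of_nonneg_of_le (fun i => div_nonneg (hμ0 i) (by linarith [hμ0 i])) hterm) hsum
    _ ≤ _ := tsum_min_one_mul_nat_add_one_rpow_neg_le hc hs
end

section
/- Let n ≥ 1, let a₁ ≥ a₂ ≥ … ≥ a_n ≥ 0 be a nonincreasing sequence of nonnegative reals, and let t ≥ 0. Then Σ_{i=1}^n min(t, aᵢ) = min_{0 ≤ h ≤ n} ( h·t + Σ_{i=h+1}^n aᵢ ). -/
/-!
Each term satisfies `min t aᵢ ≤ t` and `min t aᵢ ≤ aᵢ`; bounding the first `h` terms by `t` and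
the others by `aᵢ` shows that the left side is at most every candidate on the right. Since `a` is
nonincreasing, there is an index `h` with `aᵢ ≥ t` for `i < h` and `aᵢ ≤ t` for `i ≥ h`, and for
this `h` both bounds are equalities.
-/

open Finset

section SumMin

variable {M : Type*} [AddCommMonoid M] [LinearOrder M]

theorem sum_range_min_le_nsmul_add_sum_Ico [IsOrderedAddMonoid M] (a : ℕ → M) (t : M) {h n : ℕ}
    (hhn : h ≤ n) :
    ∑ i ∈ range n, min t (a i) ≤ h • t + ∑ i ∈ Ico h n, a i := by
  rw [range_eq_Ico, ← sum_Ico_consecutive _ (Nat.zero_le h) hhn]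
  gcongr ?_ + ?_
  · calc ∑ i ∈ Ico 0 h, min t (a i) ≤ ∑ _i ∈ Ico 0 h, t :=
          sum_le_sum fun i _ => min_le_left _ _
      _ = h • t := by simp
  · exact sum_le_sum fun i _ => min_le_right _ _

theorem sum_range_min_eq_nsmul_add_sum_Ico (a : ℕ → M) (t : M) {h n : ℕ} (hhn : h ≤ n)
    (hhead : ∀ i < h, t ≤ a i) (htail : ∀ i ∈ Ico h n, a i ≤ t) :
    ∑ i ∈ range n, min t (a i) = h • t + ∑ i ∈ Ico h n, a i := by
  rw [range_eq_Ico, ← sum_Ico_consecutive _ (Nat.zero_le h) hhn, ← range_eq_Ico]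
  congr 1
  · rw [sum_congr rfl fun i hi => min_eq_left (hhead i (mem_range.mp hi))]
    simp
  · exact sum_congr rfl fun i hi => min_eq_right (htail i hi)

end SumMin

theorem exists_threshold_of_antitoneOn {α : Type*} [LinearOrder α] {a : ℕ → α} {n : ℕ}
    (ha : AntitoneOn a (Set.Iio n)) (t : α) :
    ∃ h ≤ n, (∀ i < h, t ≤ a i) ∧ ∀ i ∈ Ico h n, a i ≤ t := by
  classical
  have hex : ∃ h, n ≤ h ∨ a h ≤ t := ⟨n, .inl le_rfl⟩
  have hle : Nat.find hex ≤ n := Nat.find_min' hex (.inl le_rfl)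
  refine ⟨Nat.find hex, hle, fun i hi => ?_, fun i hi => ?_⟩
  · exact (not_le.mp (not_or.mp (Nat.find_min hex hi)).2).le
  · obtain ⟨hhi, hin⟩ := mem_Ico.mp hi
    have hfound : a (Nat.find hex) ≤ t :=
      (Nat.find_spec hex).resolve_left (by omega)
    exact (ha (lt_of_le_of_lt hhi hin) hin hhi).trans hfound

theorem sum_min_eq_min_head_tail_general
    (n : ℕ) (a : ℕ → ℝ)
    (hmono : ∀ i j, i ≤ j → j < n → a j ≤ a i)
    (t : ℝ) :
    ∑ i ∈ Finset.range n, min t (a i) =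
      (Finset.range (n + 1)).inf' Finset.nonempty_range_add_one
        (fun h => (h : ℝ) * t + ∑ i ∈ Finset.Ico h n, a i) := by
  obtain ⟨h, hhn, hhead, htail⟩ :=
    exists_threshold_of_antitoneOn (fun i _ j hj hij => hmono i j hij hj) t
  apply le_antisymm
  · refine le_inf' _ _ fun k hk => ?_
    simpa only [nsmul_eq_mul] using
      sum_range_min_le_nsmul_add_sum_Ico a t (Nat.lt_succ_iff.mp (mem_range.mp hk))
  · rw [sum_range_min_eq_nsmul_add_sum_Ico a t hhn hhead htail, nsmul_eq_mul]
    exact inf'_le _ (mem_range.mpr (Nat.lt_succ_of_le hhn))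

/-- For a nonincreasing sequence `a 0 ≥ a 1 ≥ … ≥ a (n-1) ≥ 0` (representing `a₁ ≥ … ≥ a_n`)
and `t ≥ 0`, we have `Σ_{i<n} min t (a i) = min_{0 ≤ h ≤ n} (h·t + Σ_{h ≤ i < n} a i)`. -/
theorem sum_min_eq_min_head_tail
    (n : ℕ) (hn : 1 ≤ n) (a : ℕ → ℝ)
    (ha0 : ∀ i < n, 0 ≤ a i)
    (hmono : ∀ i j, i ≤ j → j < n → a j ≤ a i)
    (t : ℝ) (ht : 0 ≤ t) :
    ∑ i ∈ Finset.range n, min t (a i) =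
      (Finset.range (n + 1)).inf' Finset.nonempty_range_add_one
        (fun h => (h : ℝ) * t + ∑ i ∈ Finset.Ico h n, a i) :=
  sum_min_eq_min_head_tail_general n a hmono t
end

section
/- Let φ: [0,∞) → [0,∞) be a sub-root function, i.e. φ is nondecreasing and r ↦ φ(r)/√r is nonincreasing on (0,∞), and suppose φ(r₀) > 0 for some r₀ > 0. Then the equation φ(r) = r has a unique positive solution r*, and for every r > 0, r ≥ φ(r) if and only if r ≥ r*. -/
/-!
Write `ψ r = φ r / √r`. Since `ψ` is nonincreasing, `φ r ≤ ψ s * √r` for `0 < s ≤ r`, so once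
`φ s ≤ s` we get `φ r ≤ √s * √r < r` for every `r > s`: the positive `r` with `φ r ≤ r` form an
up-set on which the inequality is strict beyond its first point. This gives uniqueness and the
characterisation of `{r > 0 | φ r ≤ r}`. For existence, `φ r` is squeezed against `c √r` with
`c = ψ r₀ > 0`, so `r ≤ φ r` holds for small `r` and fails for large `r`; the supremum of
`{r > 0 | r ≤ φ r}` is then a fixed point because `φ` is monotone.
-/

open Real Set

lemma Real.le_mul_sqrt_iff_le_sq {r c : ℝ} (hr : 0 < r) (hc : 0 ≤ c) :
    r ≤ c * √r ↔ r ≤ c ^ 2 := by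
  rw [← sqrt_le_left hc]
  nth_rw 1 [← mul_self_sqrt hr.le]
  exact mul_le_mul_iff_left₀ (sqrt_pos.2 hr)

namespace SubRoot

variable {φ : ℝ → ℝ}

section Antitone

variable (hsubroot : AntitoneOn (fun r => φ r / √r) (Ioi 0))
include hsubroot

lemma apply_le_div_sqrt_mul_sqrt {s r : ℝ} (hs : 0 < s) (hsr : s ≤ r) :
    φ r ≤ φ s / √s * √r :=
  (div_le_iff₀ (sqrt_pos.2 (hs.trans_le hsr))).1 (hsubroot hs (hs.trans_le hsr) hsr)

lemma div_sqrt_mul_sqrt_le_apply {s r : ℝ} (hs : 0 < s) (hsr : s ≤ r) :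
    φ r / √r * √s ≤ φ s :=
  (le_div_iff₀ (sqrt_pos.2 hs)).1 (hsubroot hs (hs.trans_le hsr) hsr)

lemma apply_lt_self_of_apply_le_self {s r : ℝ} (hs : 0 < s) (hsr : s < r) (hφs : φ s ≤ s) :
    φ r < r :=
  calc φ r ≤ φ s / √s * √r := apply_le_div_sqrt_mul_sqrt hsubroot hs hsr.le
    _ ≤ s / √s * √r := by gcongr
    _ = √s * √r := by rw [div_sqrt]
    _ < √r * √r := mul_lt_mul_of_pos_right (sqrt_lt_sqrt hs.le hsr) (sqrt_pos.2 (hs.trans hsr))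
    _ = r := mul_self_sqrt (hs.trans hsr).le

lemma apply_le_self_iff_le {p r : ℝ} (hp : 0 < p) (hfix : φ p = p) (hr : 0 < r) :
    φ r ≤ r ↔ p ≤ r := by
  refine ⟨fun hφr => ?_, fun hpr => ?_⟩
  · by_contra! hrp
    exact (apply_lt_self_of_apply_le_self hsubroot hr hrp hφr).ne hfix
  · rcases hpr.eq_or_lt with rfl | hpr
    · exact hfix.le
    · exact (apply_lt_self_of_apply_le_self hsubroot hp hpr hfix.le).le

end Antitone

lemma exists_pos_fixed_of_bddAbove (hmono : MonotoneOn φ (Ici 0)) {r₁ : ℝ} (hr₁ : 0 < r₁)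
    (h₁ : r₁ ≤ φ r₁) (hbdd : BddAbove {r | 0 < r ∧ r ≤ φ r}) :
    ∃ p, 0 < p ∧ φ p = p := by
  set S := {r | 0 < r ∧ r ≤ φ r}
  have hp : 0 < sSup S := hr₁.trans_le (le_csSup hbdd ⟨hr₁, h₁⟩)
  have hmono_p : ∀ r ∈ S, φ r ≤ φ (sSup S) := fun r hr =>
    hmono hr.1.le hp.le (le_csSup hbdd hr)
  have hp_le : sSup S ≤ φ (sSup S) :=
    csSup_le ⟨r₁, hr₁, h₁⟩ fun r hr => hr.2.trans (hmono_p r hr)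
  refine ⟨sSup S, hp, le_antisymm ?_ hp_le⟩
  exact le_csSup hbdd ⟨hp.trans_le hp_le, hmono hp.le (hp.trans_le hp_le).le hp_le⟩

lemma exists_pos_fixed (hmono : MonotoneOn φ (Ici 0))
    (hsubroot : AntitoneOn (fun r => φ r / √r) (Ioi 0)) (hpos : ∃ r₀, 0 < r₀ ∧ 0 < φ r₀) :
    ∃ p, 0 < p ∧ φ p = p := by
  obtain ⟨r₀, hr₀, hφr₀⟩ := hpos
  set c := φ r₀ / √r₀
  have hc : 0 < c := div_pos hφr₀ (sqrt_pos.2 hr₀)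
  have hr₁ : 0 < min r₀ (c ^ 2) := lt_min hr₀ (by positivity)
  have h₁ : min r₀ (c ^ 2) ≤ φ (min r₀ (c ^ 2)) :=
    ((le_mul_sqrt_iff_le_sq hr₁ hc.le).2 (min_le_right _ _)).trans
      (div_sqrt_mul_sqrt_le_apply hsubroot hr₁ (min_le_left _ _))
  refine exists_pos_fixed_of_bddAbove hmono hr₁ h₁ ⟨max r₀ (c ^ 2), fun r ⟨hr, hrφ⟩ => ?_⟩
  rcases le_total r r₀ with hrr₀ | hr₀r
  · exact hrr₀.trans (le_max_left _ _)
  · have hr_le : r ≤ c * √r := hrφ.trans (apply_le_div_sqrt_mul_sqrt hsubroot hr₀ hr₀r)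
    exact ((le_mul_sqrt_iff_le_sq hr hc.le).1 hr_le).trans (le_max_right _ _)

end SubRoot

theorem subroot_unique_fixed_point_general
    (φ : ℝ → ℝ)
    (hmono : MonotoneOn φ (Set.Ici (0 : ℝ)))
    (hsubroot : AntitoneOn (fun r => φ r / Real.sqrt r) (Set.Ioi (0 : ℝ)))
    (hpos : ∃ r₀ : ℝ, 0 < r₀ ∧ 0 < φ r₀) :
    ∃ rstar : ℝ, 0 < rstar ∧ φ rstar = rstar ∧
      (∀ r : ℝ, 0 < r → φ r = r → r = rstar) ∧
      (∀ r : ℝ, 0 < r → (φ r ≤ r ↔ rstar ≤ r)) := by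
  obtain ⟨p, hp, hfix⟩ := SubRoot.exists_pos_fixed hmono hsubroot hpos
  refine ⟨p, hp, hfix, fun r hr hφr => le_antisymm ?_ ?_,
    fun r hr => SubRoot.apply_le_self_iff_le hsubroot hp hfix hr⟩
  · exact (SubRoot.apply_le_self_iff_le hsubroot hr hφr hp).1 hfix.le
  · exact (SubRoot.apply_le_self_iff_le hsubroot hp hfix hr).1 hφr.le

/-- A sub-root function (nonnegative, nondecreasing, with `φ(r)/√r` nonincreasing on `(0,∞)`)
that is positive somewhere has a unique positive fixed point `r*`, and for every `r > 0`,
`φ(r) ≤ r` if and only if `r* ≤ r`. -/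
theorem subroot_unique_fixed_point
    (φ : ℝ → ℝ)
    (hnonneg : ∀ r, 0 ≤ r → 0 ≤ φ r)
    (hmono : MonotoneOn φ (Set.Ici (0 : ℝ)))
    (hsubroot : AntitoneOn (fun r => φ r / Real.sqrt r) (Set.Ioi (0 : ℝ)))
    (hpos : ∃ r₀ : ℝ, 0 < r₀ ∧ 0 < φ r₀) :
    ∃ rstar : ℝ, 0 < rstar ∧ φ rstar = rstar ∧
      (∀ r : ℝ, 0 < r → φ r = r → r = rstar) ∧
      (∀ r : ℝ, 0 < r → (φ r ≤ r ↔ rstar ≤ r)) :=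
  subroot_unique_fixed_point_general φ hmono hsubroot hpos
end
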